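/- arXiv:1006.5349 — 2 statements merged into one kernel-verified Lean document; each statement's English description precedes it below -/
import Mathlib

section
/- Segment integral lemma: Let E be a Banach space, t>0, p∈[1,∞) and x∈L^p(−1,t;E). Then the function y:[0,t]→L^p(−1,0;E) defined by y(s):=x_s is Bochner integrable; the integral ∫_0^t y(s)ds belongs to the Sobolev space W^{1,p}(−1,0;E); for almost every u∈(−1,0) one has (∫_0^t y(s)ds)(u) = ∫_0^t x(s+u)ds; and the weak derivative satisfies (∫_0^t y(s)ds)′ = y(t) − y(0), i.e. (∫_0^t y(s)ds)′(u) = x(t+u) − x(u) for almost every u∈(−1,0). -/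
open MeasureTheory Filter Set
open scoped ENNReal NNReal

noncomputable section

namespace SDEPaper

/-- `g` is the weak derivative of `f` on `(a,b)`: for every smooth test function `φ`
compactly supported in `(a,b)` one has `∫ φ' f = − ∫ φ g`. -/
def HasWeakDerivOn {E : Type*} [NormedAddCommGroup E] [NormedSpace ℝ E]
    (f g : ℝ → E) (a b : ℝ) : Prop :=
  ∀ φ : ℝ → ℝ, ContDiff ℝ (⊤ : ℕ∞) φ → tsupport φ ⊆ Set.Ioo a b →
    ∫ u in Set.Ioc a b, deriv φ u • f u = - ∫ u in Set.Ioc a b, φ u • g u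

section AuxHelpers

variable {α : Type*} [MeasurableSpace α] {E : Type*} [NormedAddCommGroup E] [NormedSpace ℝ E]
  {p : ℝ≥0∞} [Fact (1 ≤ p)]

/-- Restriction of an `Lp` function to a sub-measure, as a continuous linear map. -/
def restrictCLM (μ : Measure α) (s : Set α) :
    Lp E p μ →L[ℝ] Lp E p (μ.restrict s) :=
  LinearMap.mkContinuous
    { toFun := fun f => MemLp.toLp (f : α → E) ((Lp.memLp f).restrict s)
      map_add' := fun f g => by
        rw [← MemLp.toLp_add ((Lp.memLp f).restrict s) ((Lp.memLp g).restrict s)]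
        exact MemLp.toLp_congr _ _ (ae_restrict_of_ae (Lp.coeFn_add f g))
      map_smul' := fun c f => by
        simp only [RingHom.id_apply]
        rw [← MemLp.toLp_const_smul c ((Lp.memLp f).restrict s)]
        exact MemLp.toLp_congr _ _ (ae_restrict_of_ae (Lp.coeFn_smul c f)) }
    1 (fun f => by
      rw [one_mul]
      simp only [LinearMap.coe_mk, AddHom.coe_mk]
      rw [Lp.norm_toLp, Lp.norm_def]
      exact ENNReal.toReal_mono (Lp.eLpNorm_ne_top f)
        (eLpNorm_mono_measure _ Measure.restrict_le_self))

lemma coeFn_restrictCLM (μ : Measure α) (s : Set α) (f : Lp E p μ) :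
    (restrictCLM (E := E) (p := p) μ s f : α → E) =ᵐ[μ.restrict s] f :=
  MemLp.coeFn_toLp ((Lp.memLp f).restrict s)

variable [CompleteSpace E]

/-- Integration over a set, as a continuous linear map on `Lp` of a finite measure. -/
def setIntegralCLM (μ : Measure α) [IsFiniteMeasure μ] (A : Set α) :
    Lp E p μ →L[ℝ] E :=
  LinearMap.mkContinuous
    { toFun := fun f => ∫ u in A, f u ∂μ
      map_add' := fun f g => by
        rw [← integral_add (((Lp.memLp f).integrable Fact.out).integrableOn)
          (((Lp.memLp g).integrable Fact.out).integrableOn)]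
        exact integral_congr_ae (ae_restrict_of_ae (Lp.coeFn_add f g))
      map_smul' := fun c f => by
        simp only [RingHom.id_apply]
        rw [← integral_smul]
        exact integral_congr_ae (ae_restrict_of_ae (Lp.coeFn_smul c f)) }
    ((μ Set.univ ^ (1 - 1 / p.toReal)).toReal)
    (fun f => by
      simp only [LinearMap.coe_mk, AddHom.coe_mk]
      have hfi : Integrable (f : α → E) μ := (Lp.memLp f).integrable Fact.out
      have hexp : 0 ≤ 1 - 1 / p.toReal := by
        rcases eq_or_ne p ∞ with h | h
        · simp [h]
        · have h0 : (1 : ℝ≥0∞) ≤ p := Fact.out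
          have h1 : (1 : ℝ) ≤ p.toReal := by
            have := ENNReal.toReal_mono h h0
            simpa using this
          have h2 : 1 / p.toReal ≤ 1 := by
            rw [div_le_one (by linarith)]; linarith
          linarith
      have hc : (μ Set.univ) ^ (1 - 1 / p.toReal) < ∞ :=
        ENNReal.rpow_lt_top_of_nonneg hexp (measure_ne_top μ _)
      calc ‖∫ u in A, f u ∂μ‖ ≤ ∫ u in A, ‖f u‖ ∂μ := norm_integral_le_integral_norm _
        _ ≤ ∫ u, ‖f u‖ ∂μ :=
            setIntegral_le_integral hfi.norm (Eventually.of_forall fun _ => norm_nonneg _)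
        _ = (∫⁻ u, ‖f u‖ₑ ∂μ).toReal :=
            integral_norm_eq_lintegral_enorm (Lp.aestronglyMeasurable f)
        _ = (eLpNorm (f : α → E) 1 μ).toReal := by rw [eLpNorm_one_eq_lintegral_enorm]
        _ ≤ ((μ Set.univ ^ (1 - 1 / p.toReal)).toReal) * ‖f‖ := by
            have hle := eLpNorm_le_eLpNorm_mul_rpow_measure_univ (p := 1) (q := p)
              Fact.out (Lp.aestronglyMeasurable f)
            have hle' : eLpNorm (f : α → E) 1 μ ≤
                eLpNorm (f : α → E) p μ * μ Set.univ ^ (1 - 1 / p.toReal) := by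
              simpa using hle
            have hne : eLpNorm (f : α → E) p μ * μ Set.univ ^ (1 - 1 / p.toReal) ≠ ∞ :=
              ENNReal.mul_ne_top (Lp.eLpNorm_ne_top f) hc.ne
            calc (eLpNorm (f : α → E) 1 μ).toReal
                ≤ (eLpNorm (f : α → E) p μ * μ Set.univ ^ (1 - 1 / p.toReal)).toReal :=
                  ENNReal.toReal_mono hne hle'
              _ = ((μ Set.univ ^ (1 - 1 / p.toReal)).toReal) * ‖f‖ := by
                  rw [ENNReal.toReal_mul, Lp.norm_def, mul_comm])

lemma setIntegralCLM_apply (μ : Measure α) [IsFiniteMeasure μ] (A : Set α) (f : Lp E p μ) :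
    setIntegralCLM (E := E) (p := p) μ A f = ∫ u in A, f u ∂μ := rfl

end AuxHelpers

section ShiftHelpers

variable {E : Type*} [NormedAddCommGroup E] [NormedSpace ℝ E] [CompleteSpace E]

lemma shift_setIntegral_repr (f : ℝ → E) (hf : Integrable f volume) {a b : ℝ} (hab : a ≤ b)
    (c : ℝ) :
    ∫ u in Set.Ioc a b, f (c + u) =
      (∫ v in (0:ℝ)..(c + b), f v) - ∫ v in (0:ℝ)..(c + a), f v := by
  have hii : ∀ a b : ℝ, IntervalIntegrable f volume a b := fun a b => hf.intervalIntegrable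
  rw [← intervalIntegral.integral_of_le hab,
    intervalIntegral.integral_comp_add_left (fun v => f v) c,
    ← intervalIntegral.integral_interval_sub_left (hii 0 (c + b)) (hii 0 (c + a))]

lemma shift_setIntegral_cont (f : ℝ → E) (hf : Integrable f volume) {a b : ℝ} (hab : a ≤ b) :
    Continuous fun c : ℝ => ∫ u in Set.Ioc a b, f (c + u) := by
  have hP : Continuous fun r : ℝ => ∫ v in (0:ℝ)..r, f v :=
    intervalIntegral.continuous_primitive (fun a b => hf.intervalIntegrable) 0
  have : (fun c : ℝ => ∫ u in Set.Ioc a b, f (c + u)) =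
      fun c => (∫ v in (0:ℝ)..(c + b), f v) - ∫ v in (0:ℝ)..(c + a), f v :=
    funext fun c => shift_setIntegral_repr f hf hab c
  rw [this]
  exact (hP.comp (continuous_id.add continuous_const)).sub
    (hP.comp (continuous_id.add continuous_const))

end ShiftHelpers

set_option maxHeartbeats 1000000

/-- **Lemma 4.2 (segment integral lemma).** Let `E` be a Banach space, `t > 0`,
`p ∈ [1,∞)` and `x ∈ L^p(−1,t;E)`. Then the function `y : [0,t] → L^p(−1,0;E)`,
`y(s) := x_s` (the segment `x_s(u) = x(s+u)`), is Bochner integrable; the integral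
`I = ∫_0^t y(s) ds` belongs to `W^{1,p}(−1,0;E)`; for a.e. `u ∈ (−1,0)` one has
`I(u) = ∫_0^t x(s+u) ds`; and the weak derivative of `I` is `u ↦ x(t+u) − x(u)`,
i.e. `I' = y(t) − y(0)`. -/
theorem segment_integral_lemma
    {E : Type*} [NormedAddCommGroup E] [NormedSpace ℝ E] [CompleteSpace E]
    (p : ℝ≥0∞) [Fact (1 ≤ p)] (hp : p ≠ ⊤)
    (t : ℝ) (ht : 0 < t)
    (x : ℝ → E) (hx : MemLp x p (volume.restrict (Set.Ioc (-1:ℝ) t)))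
    (y : ℝ → Lp E p (volume.restrict (Set.Ioc (-1:ℝ) 0)))
    (hy : ∀ s ∈ Set.Icc (0:ℝ) t, ∀ᵐ u ∂(volume.restrict (Set.Ioc (-1:ℝ) 0)),
      (y s : ℝ → E) u = x (s + u)) :
    IntegrableOn y (Set.Ioc 0 t) volume ∧
    ∀ I : Lp E p (volume.restrict (Set.Ioc (-1:ℝ) 0)),
      I = ∫ s in Set.Ioc (0:ℝ) t, y s →
      (∀ᵐ u ∂(volume.restrict (Set.Ioc (-1:ℝ) 0)),
        (I : ℝ → E) u = ∫ s in Set.Ioc (0:ℝ) t, x (s + u)) ∧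
      ∃ g : ℝ → E, MemLp g p (volume.restrict (Set.Ioc (-1:ℝ) 0)) ∧
        (∀ᵐ u ∂(volume.restrict (Set.Ioc (-1:ℝ) 0)), g u = x (t + u) - x u) ∧
        HasWeakDerivOn (fun u => ∫ s in Set.Ioc (0:ℝ) t, x (s + u)) g (-1) 0 := by
  classical
  revert y hy
  -- notation
  set μ0 : Measure ℝ := volume.restrict (Set.Ioc (-1:ℝ) 0) with hμ0
  set νt : Measure ℝ := volume.restrict (Set.Ioc (0:ℝ) t) with hνt
  haveI hfin0 : IsFiniteMeasure μ0 := by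
    constructor
    rw [hμ0, Measure.restrict_apply_univ, Real.volume_Ioc]
    exact ENNReal.ofReal_lt_top
  haveI hfint : IsFiniteMeasure νt := by
    constructor
    rw [hνt, Measure.restrict_apply_univ, Real.volume_Ioc]
    exact ENNReal.ofReal_lt_top
  haveI hfinIt : IsFiniteMeasure (volume.restrict (Set.Ioc (-1:ℝ) t)) := by
    constructor
    rw [Measure.restrict_apply_univ, Real.volume_Ioc]
    exact ENNReal.ofReal_lt_top
  intro y hy
  -- the good representative X
  set x' : ℝ → E := hx.aestronglyMeasurable.mk x with hx'def
  have hx'sm : StronglyMeasurable x' := hx.aestronglyMeasurable.stronglyMeasurable_mk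
  have hxx' : x =ᵐ[volume.restrict (Set.Ioc (-1:ℝ) t)] x' := hx.aestronglyMeasurable.ae_eq_mk
  have hx'mem : MemLp x' p (volume.restrict (Set.Ioc (-1:ℝ) t)) := hx.ae_eq hxx'
  set X : ℝ → E := (Set.Ioc (-1:ℝ) t).indicator x' with hXdef
  have hXsm : StronglyMeasurable X := hx'sm.indicator measurableSet_Ioc
  have hXmem : MemLp X p volume :=
    ⟨hXsm.aestronglyMeasurable, by
      rw [eLpNorm_indicator_eq_eLpNorm_restrict measurableSet_Ioc]
      exact hx'mem.2⟩
  have hXint : Integrable X volume := by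
    rw [hXdef, integrable_indicator_iff measurableSet_Ioc]
    exact hx'mem.integrable Fact.out
  -- the exceptional null set
  obtain ⟨N', hN'meas, hN'null, hxeq⟩ :
      ∃ N' : Set ℝ, MeasurableSet N' ∧ volume N' = 0 ∧
        ∀ v ∈ Set.Ioc (-1:ℝ) t, v ∉ N' → x v = X v := by
    set N := toMeasurable (volume.restrict (Set.Ioc (-1:ℝ) t)) {v | x v ≠ x' v} with hNdef
    refine ⟨N ∩ Set.Ioc (-1:ℝ) t, (measurableSet_toMeasurable _ _).inter measurableSet_Ioc,
        ?_, ?_⟩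
    · have h0 : volume.restrict (Set.Ioc (-1:ℝ) t) N = 0 := by
        rw [hNdef, measure_toMeasurable]
        exact ae_iff.mp hxx'
      rwa [Measure.restrict_apply (measurableSet_toMeasurable _ _)] at h0
    · intro v hv hvn
      have hvN : v ∉ N := fun h => hvn ⟨h, hv⟩
      have : x v = x' v := by
        by_contra h
        exact hvN (subset_toMeasurable _ _ h)
      rw [this, hXdef, Set.indicator_of_mem hv]
  have htransL : ∀ a : ℝ, ∀ᵐ v ∂(volume : Measure ℝ), a + v ∉ N' := by
    intro a
    have h0 : volume ((fun v : ℝ => a + v) ⁻¹' N') = 0 :=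
      (measurePreserving_add_left volume a).quasiMeasurePreserving.preimage_null hN'null
    exact measure_eq_zero_iff_ae_notMem.mp h0
  have htransR : ∀ a : ℝ, ∀ᵐ v ∂(volume : Measure ℝ), v + a ∉ N' := by
    intro a
    have h0 : volume ((fun v : ℝ => v + a) ⁻¹' N') = 0 :=
      (measurePreserving_add_right volume a).quasiMeasurePreserving.preimage_null hN'null
    exact measure_eq_zero_iff_ae_notMem.mp h0
  -- comparison of x and X on segments
  have hxX : ∀ s ∈ Set.Icc (0:ℝ) t,
      (fun u => x (s + u)) =ᵐ[μ0] fun u => X (s + u) := by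
    intro s hs
    filter_upwards [ae_restrict_mem measurableSet_Ioc, ae_restrict_of_ae (htransL s)]
      with u hu hnu
    exact hxeq _ ⟨by linarith [hu.1, hs.1], by linarith [hu.2, hs.2]⟩ hnu
  have hxXu : ∀ u ∈ Set.Icc (-1:ℝ) 0,
      (fun s => x (s + u)) =ᵐ[νt] fun s => X (s + u) := by
    intro u hu
    filter_upwards [ae_restrict_mem measurableSet_Ioc, ae_restrict_of_ae (htransR u)]
      with s hsm hns
    have : s + u ∈ Set.Ioc (-1:ℝ) t := ⟨by linarith [hsm.1, hu.1], by linarith [hsm.2, hu.2]⟩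
    have hns' : s + u ∉ N' := hns
    exact hxeq _ this hns'
  -- shifted integrability / MemLp facts
  have hshift_int_r : ∀ a : ℝ, Integrable (fun v => X (v + a)) volume :=
    fun a => hXint.comp_add_right a
  have hshift_int_l : ∀ a : ℝ, Integrable (fun v => X (a + v)) volume :=
    fun a => hXint.comp_add_left a
  have nXint : Integrable (fun v => ‖X v‖) volume := hXint.norm
  set B : ℝ := ∫ v, ‖X v‖ with hBdef
  -- the function G
  set G : ℝ → E := fun u => ∫ s in Set.Ioc (0:ℝ) t, X (s + u) with hGdef
  have hGflip : G = fun u => ∫ s in Set.Ioc (0:ℝ) t, X (u + s) := by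
    funext u
    exact integral_congr_ae (Eventually.of_forall fun s => show X (s + _) = X (_ + s) by rw [add_comm])
  have hGcont : Continuous G := by
    rw [hGflip]
    exact shift_setIntegral_cont X hXint ht.le
  have hFG : ∀ u ∈ Set.Ioc (-1:ℝ) 0, G u = ∫ s in Set.Ioc (0:ℝ) t, x (s + u) := by
    intro u hu
    exact (integral_congr_ae (hxXu u ⟨hu.1.le, hu.2⟩)).symm
  -- master product integrability, orientation 1 : (s, u)
  have hmaster1 : Integrable (fun z : ℝ × ℝ => X (z.1 + z.2)) (νt.prod μ0) := by
    have hmeas : AEStronglyMeasurable (fun z : ℝ × ℝ => X (z.1 + z.2)) (νt.prod μ0) :=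
      (hXsm.comp_measurable (measurable_fst.add measurable_snd)).aestronglyMeasurable
    rw [integrable_prod_iff hmeas]
    constructor
    · exact Eventually.of_forall fun s => (hshift_int_l s).integrableOn
    · refine Integrable.mono' (integrable_const B)
        ((shift_setIntegral_cont (fun v => ‖X v‖) nXint (le_of_lt (by norm_num : (-1:ℝ) < 0))).aestronglyMeasurable)
        (Eventually.of_forall fun s => ?_)
      have h1 : 0 ≤ ∫ u in Set.Ioc (-1:ℝ) 0, ‖X (s + u)‖ :=
        integral_nonneg fun u => norm_nonneg _
      rw [Real.norm_eq_abs, abs_of_nonneg h1]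
      calc ∫ u in Set.Ioc (-1:ℝ) 0, ‖X (s + u)‖
          ≤ ∫ u, ‖X (s + u)‖ :=
            setIntegral_le_integral (hshift_int_l s).norm
              (Eventually.of_forall fun _ => norm_nonneg _)
        _ = B := by rw [hBdef]; exact integral_add_left_eq_self (fun v => ‖X v‖) s
  -- master product integrability, orientation 2 : (u, s)
  have hmaster2 : Integrable (fun z : ℝ × ℝ => X (z.2 + z.1)) (μ0.prod νt) := by
    have hmeas : AEStronglyMeasurable (fun z : ℝ × ℝ => X (z.2 + z.1)) (μ0.prod νt) :=
      (hXsm.comp_measurable (measurable_snd.add measurable_fst)).aestronglyMeasurable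
    rw [integrable_prod_iff hmeas]
    constructor
    · exact Eventually.of_forall fun u => (hshift_int_r u).integrableOn
    · have hcont : Continuous fun u : ℝ => ∫ s in Set.Ioc (0:ℝ) t, ‖X (u + s)‖ :=
        shift_setIntegral_cont (fun v => ‖X v‖) nXint ht.le
      have hflip : (fun u : ℝ => ∫ s in Set.Ioc (0:ℝ) t, ‖X (s + u)‖) =
          fun u => ∫ s in Set.Ioc (0:ℝ) t, ‖X (u + s)‖ := by
        funext u
        exact integral_congr_ae (Eventually.of_forall fun s => show ‖X (s + u)‖ = ‖X (u + s)‖ by rw [add_comm])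
      refine Integrable.mono' (integrable_const B)
        (by rw [hflip]; exact hcont.aestronglyMeasurable)
        (Eventually.of_forall fun u => ?_)
      have h1 : 0 ≤ ∫ s in Set.Ioc (0:ℝ) t, ‖X (s + u)‖ :=
        integral_nonneg fun s => norm_nonneg _
      rw [Real.norm_eq_abs, abs_of_nonneg h1]
      calc ∫ s in Set.Ioc (0:ℝ) t, ‖X (s + u)‖
          ≤ ∫ s, ‖X (s + u)‖ :=
            setIntegral_le_integral (hshift_int_r u).norm
              (Eventually.of_forall fun _ => norm_nonneg _)
        _ = B := by rw [hBdef]; exact integral_add_right_eq_self (fun v => ‖X v‖) u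
  -- continuity of the Lp-valued segment map
  have key_int : IntegrableOn y (Set.Ioc 0 t) volume := by
    set XLp : Lp E p volume := hXmem.toLp X with hXLp
    set shiftCM : ℝ → C(ℝ, ℝ) := fun s => ⟨fun u => u + s, continuous_id.add continuous_const⟩ with hshiftCM
    have hshiftcont : Continuous shiftCM := by
      apply ContinuousMap.continuous_of_continuous_uncurry
      exact continuous_snd.add continuous_fst
    have hgm : ∀ s : ℝ, MeasurePreserving (shiftCM s) volume volume :=
      fun s => measurePreserving_add_right volume s
    have hwcont : Continuous fun s : ℝ =>
        Lp.compMeasurePreserving (E := E) (p := p) (shiftCM s) (hgm s) XLp :=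
      Continuous.compMeasurePreservingLp continuous_const hshiftcont hgm hp
    set w : ℝ → Lp E p (volume : Measure ℝ) :=
      fun s => Lp.compMeasurePreserving (E := E) (p := p) (shiftCM s) (hgm s) XLp with hwdef
    set z : ℝ → Lp E p μ0 :=
      fun s => restrictCLM (E := E) (p := p) volume (Set.Ioc (-1:ℝ) 0) (w s) with hzdef
    have hzcont : Continuous z :=
      (restrictCLM (E := E) (p := p) volume (Set.Ioc (-1:ℝ) 0)).continuous.comp hwcont
    have hyz : ∀ s ∈ Set.Icc (0:ℝ) t, y s = z s := by
      intro s hs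
      apply Lp.ext
      have e0 : (y s : ℝ → E) =ᵐ[μ0] fun u => x (s + u) := hy s hs
      have e1 : (y s : ℝ → E) =ᵐ[μ0] fun u => X (s + u) := e0.trans (hxX s hs)
      have e2 : (z s : ℝ → E) =ᵐ[μ0] (w s : ℝ → E) :=
        coeFn_restrictCLM volume (Set.Ioc (-1:ℝ) 0) (w s)
      have e3 : (w s : ℝ → E) =ᵐ[volume] (XLp : ℝ → E) ∘ (shiftCM s) :=
        Lp.coeFn_compMeasurePreserving XLp (hgm s)
      have e4 : ((XLp : ℝ → E) ∘ (shiftCM s)) =ᵐ[volume] (X ∘ (shiftCM s)) :=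
        (hgm s).quasiMeasurePreserving.ae_eq_comp (hXmem.coeFn_toLp)
      have e5 : (X ∘ (shiftCM s)) =ᵐ[volume] fun u => X (s + u) :=
        Eventually.of_forall fun u => by
          simp only [Function.comp, hshiftCM, ContinuousMap.coe_mk, add_comm]
      have e6 : (z s : ℝ → E) =ᵐ[μ0] fun u => X (s + u) :=
        e2.trans (ae_restrict_of_ae ((e3.trans e4).trans e5))
      exact e1.trans e6.symm
    have hzint : IntegrableOn z (Set.Ioc 0 t) volume := hzcont.integrableOn_Ioc
    exact hzint.congr_fun
      (fun s hs => (hyz s (Set.Ioc_subset_Icc_self hs)).symm) measurableSet_Ioc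
  refine ⟨key_int, ?_⟩
  intro I hI_eq
  have hy_int : Integrable y νt := key_int
  -- the set-integral identity
  have hGint : Integrable G μ0 := hGcont.integrableOn_Ioc
  have hTI : ∀ A : Set ℝ, MeasurableSet A →
      ∫ u in A, (I : ℝ → E) u ∂μ0 = ∫ u in A, G u ∂μ0 := by
    intro A hA
    set T := setIntegralCLM (E := E) (p := p) μ0 A with hTdef
    have h1 : ∫ s, T (y s) ∂νt = T I := by
      rw [hI_eq]
      exact T.integral_comp_comm hy_int
    have h2 : ∀ s ∈ Set.Ioc (0:ℝ) t, T (y s) = ∫ u in A, X (s + u) ∂μ0 := by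
      intro s hs
      have hmem : s ∈ Set.Icc (0:ℝ) t := ⟨hs.1.le, hs.2⟩
      have e0 : (y s : ℝ → E) =ᵐ[μ0] fun u => x (s + u) := hy s hmem
      have e : (y s : ℝ → E) =ᵐ[μ0.restrict A] fun u => X (s + u) :=
        (e0.trans (hxX s hmem)).filter_mono (ae_mono Measure.restrict_le_self)
      exact integral_congr_ae e
    have h3 : ∫ s, T (y s) ∂νt = ∫ s in Set.Ioc (0:ℝ) t, (∫ u in A, X (s + u) ∂μ0) := by
      refine integral_congr_ae ?_
      filter_upwards [ae_restrict_mem measurableSet_Ioc] with s hs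
      exact h2 s hs
    have hint : Integrable (fun z : ℝ × ℝ => X (z.1 + z.2)) (νt.prod (μ0.restrict A)) := by
      have hr : μ0.restrict A = volume.restrict (A ∩ Set.Ioc (-1:ℝ) 0) := by
        rw [hμ0, Measure.restrict_restrict hA]
      rw [hr, hνt, Measure.prod_restrict]
      have hm := hmaster1
      rw [hνt, hμ0, Measure.prod_restrict] at hm
      have hm' : IntegrableOn (fun z : ℝ × ℝ => X (z.1 + z.2))
          (Set.Ioc (0:ℝ) t ×ˢ Set.Ioc (-1:ℝ) 0) (volume.prod volume) := hm
      exact hm'.mono_set (Set.prod_mono_right Set.inter_subset_right)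
    have h4 : ∫ s in Set.Ioc (0:ℝ) t, (∫ u in A, X (s + u) ∂μ0)
        = ∫ u in A, G u ∂μ0 := by
      exact integral_integral_swap hint
    rw [← h4, ← h3, h1]
    rfl
  -- a.e. identification of I with G
  have hIG : (I : ℝ → E) =ᵐ[μ0] G := by
    refine ae_eq_of_forall_setIntegral_eq_of_sigmaFinite
      (fun A hA _ => ((Lp.memLp I).integrable Fact.out).integrableOn)
      (fun A hA _ => hGint.integrableOn)
      (fun A hA _ => hTI A hA)
  constructor
  · filter_upwards [hIG, ae_restrict_mem measurableSet_Ioc] with u h1 h2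
    rw [h1]
    exact hFG u h2
  -- the weak derivative part
  set g : ℝ → E := fun u => X (t + u) - X u with hgdef
  have hgmem : MemLp g p μ0 := by
    have m1 : MemLp (fun u => X (t + u)) p volume :=
      hXmem.comp_measurePreserving (measurePreserving_add_left volume t)
    exact (m1.sub hXmem).restrict _
  have hgae : ∀ᵐ u ∂μ0, g u = x (t + u) - x u := by
    filter_upwards [ae_restrict_mem measurableSet_Ioc, ae_restrict_of_ae (htransL t),
      ae_restrict_of_ae (measure_eq_zero_iff_ae_notMem.mp hN'null)] with u hu h1 h2
    have e1 : x (t + u) = X (t + u) :=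
      hxeq _ ⟨by linarith [hu.1], by linarith [hu.2]⟩ h1
    have e2 : x u = X u := hxeq _ ⟨hu.1, by linarith [hu.2]⟩ h2
    rw [hgdef]
    simp only
    rw [e1, e2]
  refine ⟨g, hgmem, hgae, ?_⟩
  intro φ hφ hsupp
  have hφc : Continuous φ := hφ.continuous
  have hDφc : Continuous (deriv φ) := hφ.continuous_deriv (by simp)
  have hφ0 : ∀ u, u ∉ Set.Ioc (-1:ℝ) 0 → φ u = 0 := fun u hu =>
    image_eq_zero_of_notMem_tsupport fun hmem => hu (Set.Ioo_subset_Ioc_self (hsupp hmem))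
  have hDφ0 : ∀ u, u ∉ Set.Ioc (-1:ℝ) 0 → deriv φ u = 0 := by
    intro u hu
    by_contra h
    exact hu (Set.Ioo_subset_Ioc_self (hsupp (support_deriv_subset (Function.mem_support.mpr h))))
  have hcs : HasCompactSupport φ :=
    HasCompactSupport.of_support_subset_isCompact
      (isCompact_Icc (a := (-1:ℝ)) (b := 0))
      ((subset_tsupport φ).trans (hsupp.trans Set.Ioo_subset_Icc_self))
  have hcsD : HasCompactSupport (deriv φ) := hcs.deriv
  obtain ⟨M, hM⟩ := hcsD.exists_bound_of_continuous hDφc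
  obtain ⟨Mφ, hMφ⟩ := hcs.exists_bound_of_continuous hφc
  -- integrabilities for the φ-weighted integrals
  have hint4 : Integrable (fun v => φ v • X v) volume := by
    refine Integrable.mono' (hXint.norm.const_mul Mφ)
      ((hφc.stronglyMeasurable.smul hXsm).aestronglyMeasurable)
      (Eventually.of_forall fun v => ?_)
    rw [norm_smul]
    exact mul_le_mul_of_nonneg_right (hMφ v) (norm_nonneg _)
  have hint5 : Integrable (fun v => φ (v - t) • X v) volume := by
    refine Integrable.mono' (hXint.norm.const_mul Mφ)
      (((hφc.comp (continuous_id.sub continuous_const)).stronglyMeasurable.smul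
        hXsm).aestronglyMeasurable)
      (Eventually.of_forall fun v => ?_)
    rw [norm_smul]
    exact mul_le_mul_of_nonneg_right (hMφ _) (norm_nonneg _)
  have hint6 : Integrable (fun u => φ u • X (t + u)) volume := by
    refine Integrable.mono' ((hshift_int_l t).norm.const_mul Mφ)
      ((hφc.stronglyMeasurable.smul
        (hXsm.comp_measurable (measurable_const_add t))).aestronglyMeasurable)
      (Eventually.of_forall fun u => ?_)
    rw [norm_smul]
    exact mul_le_mul_of_nonneg_right (hMφ _) (norm_nonneg _)
  -- step 1 : replace x by X
  have S1 : ∫ u in Set.Ioc (-1:ℝ) 0, deriv φ u • (∫ s in Set.Ioc (0:ℝ) t, x (s + u))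
      = ∫ u in Set.Ioc (-1:ℝ) 0, deriv φ u • G u := by
    refine setIntegral_congr_fun measurableSet_Ioc fun u hu => ?_
    rw [hFG u hu]
  -- step 2 : pull the scalar inside
  have S2 : ∫ u in Set.Ioc (-1:ℝ) 0, deriv φ u • G u
      = ∫ u, (∫ s, deriv φ u • X (s + u) ∂νt) ∂μ0 := by
    refine setIntegral_congr_fun measurableSet_Ioc fun u hu => ?_
    rw [integral_smul]
  -- step 3 : Fubini
  have hint2 : Integrable (fun z : ℝ × ℝ => deriv φ z.1 • X (z.2 + z.1)) (μ0.prod νt) := by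
    refine Integrable.mono' (hmaster2.norm.const_mul M)
      (((hDφc.comp continuous_fst).stronglyMeasurable.smul
        (hXsm.comp_measurable (measurable_snd.add measurable_fst))).aestronglyMeasurable)
      (Eventually.of_forall fun z => ?_)
    rw [norm_smul]
    exact mul_le_mul_of_nonneg_right (hM _) (norm_nonneg _)
  have S3 : ∫ u, (∫ s, deriv φ u • X (s + u) ∂νt) ∂μ0
      = ∫ s, (∫ u, deriv φ u • X (s + u) ∂μ0) ∂νt :=
    integral_integral_swap hint2
  -- step 4 : inner change of variables
  have S4 : ∀ s : ℝ, ∫ u, deriv φ u • X (s + u) ∂μ0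
      = ∫ v, deriv φ (v - s) • X v := by
    intro s
    have h0 : ∫ u, deriv φ u • X (s + u) ∂μ0 = ∫ u, deriv φ u • X (s + u) := by
      rw [hμ0]
      exact setIntegral_eq_integral_of_forall_compl_eq_zero fun u hu => by
        rw [hDφ0 u hu, zero_smul]
    have h := integral_add_right_eq_self (μ := volume)
      (fun v => deriv φ (v - s) • X v) s
    simp only [add_sub_cancel_right] at h
    rw [h0, ← h]
    exact integral_congr_ae (Eventually.of_forall fun u => show deriv φ u • X (s + u) = deriv φ u • X (u + s) by rw [add_comm s u])
  -- step 5 : Fubini back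
  have hint3 : Integrable (fun z : ℝ × ℝ => deriv φ (z.2 - z.1) • X z.2)
      (νt.prod volume) := by
    have hdom : Integrable (fun z : ℝ × ℝ => M * ‖X z.2‖) (νt.prod volume) :=
      Integrable.mul_prod (integrable_const M) hXint.norm
    refine Integrable.mono' hdom
      (((hDφc.comp (continuous_snd.sub continuous_fst)).stronglyMeasurable.smul
        (hXsm.comp_measurable measurable_snd)).aestronglyMeasurable)
      (Eventually.of_forall fun z => ?_)
    rw [norm_smul]
    exact mul_le_mul_of_nonneg_right (hM _) (norm_nonneg _)
  have S5 : ∫ s, (∫ v, deriv φ (v - s) • X v) ∂νt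
      = ∫ v, (∫ s, deriv φ (v - s) • X v ∂νt) :=
    integral_integral_swap hint3
  -- step 6 : scalar FTC
  have S6 : ∀ v : ℝ, (∫ s, deriv φ (v - s) • X v ∂νt) = (φ v - φ (v - t)) • X v := by
    intro v
    rw [hνt, integral_smul_const]
    congr 1
    rw [← intervalIntegral.integral_of_le ht.le,
      intervalIntegral.integral_comp_sub_left (deriv φ) v, sub_zero]
    exact intervalIntegral.integral_deriv_eq_sub
      (fun w _ => (hφ.differentiable (by simp)).differentiableAt)
      (hDφc.intervalIntegrable _ _)
  -- step 7 : split
  have S7 : ∫ v, (φ v - φ (v - t)) • X v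
      = (∫ v, φ v • X v) - ∫ v, φ (v - t) • X v := by
    simp only [sub_smul]
    exact integral_sub hint4 hint5
  -- step 8 : shift the second term
  have S8 : ∫ v, φ (v - t) • X v = ∫ u, φ u • X (t + u) := by
    have h := integral_sub_right_eq_self (μ := volume)
      (fun u => φ u • X (u + t)) t
    simp only [sub_add_cancel] at h
    rw [h]
    exact integral_congr_ae (Eventually.of_forall fun u => show φ u • X (u + t) = φ u • X (t + u) by rw [add_comm u t])
  -- step 9 : assemble the right-hand side
  have S9 : ∫ u in Set.Ioc (-1:ℝ) 0, φ u • g u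
      = (∫ u, φ u • X (t + u)) - ∫ u, φ u • X u := by
    have e1 : ∫ u in Set.Ioc (-1:ℝ) 0, φ u • g u = ∫ u, φ u • g u :=
      setIntegral_eq_integral_of_forall_compl_eq_zero fun u hu => by
        rw [hφ0 u hu, zero_smul]
    rw [e1, hgdef]
    simp only [smul_sub]
    exact integral_sub hint6 hint4
  -- final chain
  calc ∫ u in Set.Ioc (-1:ℝ) 0, deriv φ u • (∫ s in Set.Ioc (0:ℝ) t, x (s + u))
      = ∫ u in Set.Ioc (-1:ℝ) 0, deriv φ u • G u := S1
    _ = ∫ u, (∫ s, deriv φ u • X (s + u) ∂νt) ∂μ0 := S2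
    _ = ∫ s, (∫ u, deriv φ u • X (s + u) ∂μ0) ∂νt := S3
    _ = ∫ s, (∫ v, deriv φ (v - s) • X v) ∂νt :=
        integral_congr_ae (Eventually.of_forall fun s => S4 s)
    _ = ∫ v, (∫ s, deriv φ (v - s) • X v ∂νt) := S5
    _ = ∫ v, (φ v - φ (v - t)) • X v :=
        integral_congr_ae (Eventually.of_forall fun v => S6 v)
    _ = (∫ v, φ v • X v) - ∫ v, φ (v - t) • X v := S7
    _ = (∫ v, φ v • X v) - ∫ u, φ u • X (t + u) := by rw [S8]
    _ = - ((∫ u, φ u • X (t + u)) - ∫ u, φ u • X u) := by abel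
    _ = - ∫ u in Set.Ioc (-1:ℝ) 0, φ u • g u := by rw [S9]


end SDEPaper
end
end

section
/- Segment norm estimate: Let E be a Banach space, p∈[1,∞), t>0, f₀∈L^p(−1,0;E), and let X:[−1,t]→E be strongly measurable with X restricted to [−1,0) equal to f₀ and ∫_0^t ‖X(u)‖_E^{p∨2} du < ∞. Then, with X_s(u):=X(s+u) for u∈[−1,0], one has (∫_0^t ‖X_s‖²_{L^p(−1,0;E)} ds)^{1/2} ≤ ‖f₀‖_{L^p(−1,0;E)} + t^{1/(p∧2)} (∫_0^t ‖X(u)‖_E^{p∨2} du)^{1/(p∨2)}. In particular s ↦ X_s belongs to L²(0,t;L^p(−1,0;E)). -/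
open MeasureTheory Set
open scoped ENNReal

/-! For `0 < s ≤ t` the window `(s - 1, s]` of the segment `X_s` lies in `(-1, 0] ∪ (0, t]` and
meets `(-1, 0]` only when `s < 1`, so `‖X_s‖_p ≤ 𝟙_{s < 1} ‖f₀‖_p + ‖X‖_{L^p(0,t)}`. Minkowski's
inequality in `L²(0, t)` then gives `‖f₀‖_p + t^{1/2} ‖X‖_{L^p(0,t)}`, and Hölder's inequality
`‖X‖_{L^p(0,t)} ≤ t^{1/p - 1/(p∨2)} ‖X‖_{L^{p∨2}(0,t)}` turns `t^{1/2}` into `t^{1/(p∧2)}`. -/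

namespace SDEPaper

lemma setLIntegral_Ioc_comp_const_add (g : ℝ → ℝ≥0∞) (s a b : ℝ) :
    ∫⁻ u in Ioc a b, g (s + u) = ∫⁻ v in Ioc (s + a) (s + b), g v := by
  rw [(measurePreserving_add_left volume s).setLIntegral_comp_emb
    (measurableEmbedding_addLeft s), image_const_add_Ioc]

lemma enorm_norm_rpow {E : Type*} [NormedAddCommGroup E] (x : E) {r : ℝ} (hr : 0 ≤ r) :
    ‖‖x‖ ^ r‖ₑ = ‖x‖ₑ ^ r := by
  rw [Real.enorm_eq_ofReal (by positivity), ← ENNReal.ofReal_rpow_of_nonneg (norm_nonneg x) hr,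
    ofReal_norm]

section
variable {α E : Type*} [MeasurableSpace α] [NormedAddCommGroup E] {μ : Measure α}

lemma integral_norm_rpow_eq_toReal_lintegral {Y : α → E} (hY : AEStronglyMeasurable Y μ)
    {r : ℝ} (hr : 0 ≤ r) : ∫ a, ‖Y a‖ ^ r ∂μ = (∫⁻ a, ‖Y a‖ₑ ^ r ∂μ).toReal := by
  rw [← integral_toReal (hY.enorm.pow_const r)
    (ae_of_all _ fun a => ENNReal.rpow_lt_top_of_nonneg hr enorm_ne_top)]
  simp [← ENNReal.toReal_rpow]

lemma lintegral_enorm_rpow_ne_top {Y : α → E} {r : ℝ} (hr : 0 ≤ r)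
    (hY : Integrable (fun a => ‖Y a‖ ^ r) μ) : ∫⁻ a, ‖Y a‖ₑ ^ r ∂μ ≠ ∞ := by
  simpa only [enorm_norm_rpow _ hr] using hY.2.ne

lemma integrable_toReal_and_integral_rpow_le {f : α → ℝ≥0∞} (hf : AEMeasurable f μ) {r : ℝ}
    (hr : 0 < r) {R : ℝ≥0∞} (hR : R ≠ ∞) (h : (∫⁻ a, f a ∂μ) ^ r ≤ R) :
    Integrable (fun a => (f a).toReal) μ ∧ (∫ a, (f a).toReal ∂μ) ^ r ≤ R.toReal := by
  have hfin : ∫⁻ a, f a ∂μ ≠ ∞ := fun htop => hR <| top_unique <| by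
    simpa [htop, ENNReal.top_rpow_of_pos hr] using h
  refine ⟨integrable_toReal_of_lintegral_ne_top hf hfin, ?_⟩
  rw [integral_toReal hf (ae_lt_top' hf hfin), ENNReal.toReal_rpow]
  exact ENNReal.toReal_mono hR h

end

section
variable {g : ℝ → ℝ≥0∞} {p : ℝ}

lemma lintegral_segment_rpow_le (hp : 1 ≤ p) {s t : ℝ} (hs : s ∈ Ioc 0 t) :
    (∫⁻ u in Ioc (-1) 0, g (s + u)) ^ (1 / p) ≤
      (Iio 1).indicator (fun _ => (∫⁻ v in Ioc (-1) 0, g v) ^ (1 / p)) s +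
        (∫⁻ v in Ioc 0 t, g v) ^ (1 / p) := by
  have hp' : 0 ≤ 1 / p := by positivity
  rw [setLIntegral_Ioc_comp_const_add, add_zero]
  rcases lt_or_ge s 1 with hs1 | hs1
  · have hsub : Ioc (s + -1) s ⊆ Ioc (-1) 0 ∪ Ioc 0 t := fun v hv => by
      rcases le_or_gt v 0 with hv0 | hv0
      · exact Or.inl ⟨by linarith [hv.1, hs.1], hv0⟩
      · exact Or.inr ⟨hv0, hv.2.trans hs.2⟩
    rw [indicator_of_mem (mem_Iio.2 hs1)]
    calc (∫⁻ v in Ioc (s + -1) s, g v) ^ (1 / p)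
        ≤ ((∫⁻ v in Ioc (-1) 0, g v) + ∫⁻ v in Ioc 0 t, g v) ^ (1 / p) :=
          ENNReal.rpow_le_rpow ((lintegral_mono_set hsub).trans (lintegral_union_le _ _ _)) hp'
      _ ≤ _ := ENNReal.rpow_add_le_add_rpow _ _ hp' (by rw [div_le_one (by linarith)]; exact hp)
  · rw [indicator_of_notMem (notMem_Iio.2 hs1), zero_add]
    exact ENNReal.rpow_le_rpow
      (lintegral_mono_set fun v hv => ⟨by linarith [hv.1], hv.2.trans hs.2⟩) hp'

lemma volume_restrict_Ioc_Iio_one_le_one (t : ℝ) : volume.restrict (Ioc 0 t) (Iio 1) ≤ 1 := by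
  rw [Measure.restrict_apply measurableSet_Iio]
  calc volume (Iio 1 ∩ Ioc 0 t) ≤ volume (Ioc (0 : ℝ) 1) :=
        measure_mono fun s hs => ⟨hs.2.1, le_of_lt hs.1⟩
    _ = 1 := by simp

theorem lintegral_segment_le (hp : 1 ≤ p) (t : ℝ) :
    (∫⁻ s in Ioc 0 t, (∫⁻ u in Ioc (-1) 0, g (s + u)) ^ (2 / p)) ^ (2⁻¹ : ℝ) ≤
      (∫⁻ v in Ioc (-1) 0, g v) ^ (1 / p) +
        ENNReal.ofReal t ^ (2⁻¹ : ℝ) * (∫⁻ v in Ioc 0 t, g v) ^ (1 / p) := by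
  set F := (∫⁻ v in Ioc (-1) 0, g v) ^ (1 / p)
  set C := (∫⁻ v in Ioc 0 t, g v) ^ (1 / p)
  set history : ℝ → ℝ≥0∞ := (Iio 1).indicator fun _ => F
  have hpointwise : ∀ s ∈ Ioc 0 t,
      (∫⁻ u in Ioc (-1) 0, g (s + u)) ^ (2 / p) ≤
        (history + fun _ => C : ℝ → ℝ≥0∞) s ^ (2 : ℝ) := by
    intro s hs
    rw [show 2 / p = 1 / p * 2 by ring, ENNReal.rpow_mul]
    exact ENNReal.rpow_le_rpow (lintegral_segment_rpow_le hp hs) zero_le_two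
  have hhistory : (∫⁻ s in Ioc 0 t, history s ^ (2 : ℝ)) ^ (1 / 2 : ℝ) ≤ F := by
    have hsq : (fun s => history s ^ (2 : ℝ)) = (Iio 1).indicator fun _ => F ^ (2 : ℝ) :=
      (indicator_comp_of_zero (g := fun x : ℝ≥0∞ => x ^ (2 : ℝ)) (by simp)).symm
    rw [hsq, lintegral_indicator_const measurableSet_Iio]
    calc (F ^ (2 : ℝ) * volume.restrict (Ioc 0 t) (Iio 1)) ^ (1 / 2 : ℝ)
        ≤ (F ^ (2 : ℝ) * 1) ^ (1 / 2 : ℝ) := by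
          gcongr; exact volume_restrict_Ioc_Iio_one_le_one t
      _ = F := by rw [mul_one, ← ENNReal.rpow_mul]; norm_num
  have hcurrent :
      (∫⁻ _ in Ioc 0 t, C ^ (2 : ℝ)) ^ (1 / 2 : ℝ) = ENNReal.ofReal t ^ (2⁻¹ : ℝ) * C := by
    rw [setLIntegral_const, Real.volume_Ioc, sub_zero,
      ENNReal.mul_rpow_of_nonneg _ _ (by norm_num), ← ENNReal.rpow_mul, mul_comm]
    norm_num
  calc _ ≤ (∫⁻ s in Ioc 0 t, (history + fun _ => C : ℝ → ℝ≥0∞) s ^ (2 : ℝ)) ^ (1 / 2 : ℝ) := by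
        rw [one_div]
        gcongr ?_ ^ _
        exact setLIntegral_mono_ae' measurableSet_Ioc (ae_of_all _ hpointwise)
    _ ≤ (∫⁻ s in Ioc 0 t, history s ^ (2 : ℝ)) ^ (1 / 2 : ℝ) +
          (∫⁻ _ in Ioc 0 t, C ^ (2 : ℝ)) ^ (1 / 2 : ℝ) :=
        ENNReal.lintegral_Lp_add_le (aemeasurable_const.indicator measurableSet_Iio)
          aemeasurable_const one_le_two
    _ ≤ _ := by rw [hcurrent]; exact add_le_add hhistory le_rfl

end

lemma inv_two_add_one_div_sub_one_div_max (p : ℝ) :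
    (2⁻¹ : ℝ) + (1 / p - 1 / max p 2) = 1 / min p 2 := by
  rcases le_total p 2 with h | h
  · rw [max_eq_right h, min_eq_left h]; ring
  · rw [max_eq_left h, min_eq_right h]; ring

section
variable {E : Type*} [NormedAddCommGroup E] {X : ℝ → E} {p t : ℝ}

theorem lintegral_segment_enorm_le (hX : AEStronglyMeasurable X (volume.restrict (Ioc 0 t)))
    (hp : 1 ≤ p) :
    (∫⁻ s in Ioc 0 t, (∫⁻ u in Ioc (-1) 0, ‖X (s + u)‖ₑ ^ p) ^ (2 / p)) ^ (2⁻¹ : ℝ) ≤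
      (∫⁻ v in Ioc (-1) 0, ‖X v‖ₑ ^ p) ^ (1 / p) + ENNReal.ofReal t ^ (1 / min p 2) *
        (∫⁻ v in Ioc 0 t, ‖X v‖ₑ ^ max p 2) ^ (1 / max p 2) := by
  have hp0 : 0 < p := by linarith
  have hholder : (∫⁻ v in Ioc 0 t, ‖X v‖ₑ ^ p) ^ (1 / p) ≤
      (∫⁻ v in Ioc 0 t, ‖X v‖ₑ ^ max p 2) ^ (1 / max p 2) *
        ENNReal.ofReal t ^ (1 / p - 1 / max p 2) := by
    simpa [eLpNorm'] using eLpNorm'_le_eLpNorm'_mul_rpow_measure_univ hp0 (le_max_left p 2) hX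
  have hpq : 0 ≤ 1 / p - 1 / max p 2 :=
    sub_nonneg.2 (one_div_le_one_div_of_le hp0 (le_max_left p 2))
  refine (lintegral_segment_le (g := fun v => ‖X v‖ₑ ^ p) hp t).trans ?_
  rw [← inv_two_add_one_div_sub_one_div_max p,
    ENNReal.rpow_add_of_nonneg _ _ (by norm_num) hpq, mul_assoc]
  gcongr
  rw [mul_comm]
  exact hholder

theorem integrableOn_segment_norm_and_le (hX : StronglyMeasurable X) (hp : 1 ≤ p) (ht : 0 ≤ t)
    (hXhist : IntegrableOn (fun u => ‖X u‖ ^ p) (Ioc (-1) 0))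
    (hXint : IntegrableOn (fun u => ‖X u‖ ^ max p 2) (Ioc 0 t)) :
    IntegrableOn (fun s => (∫ u in Ioc (-1) 0, ‖X (s + u)‖ ^ p) ^ (2 / p)) (Ioc 0 t) ∧
    (∫ s in Ioc 0 t, (∫ u in Ioc (-1) 0, ‖X (s + u)‖ ^ p) ^ (2 / p)) ^ (2⁻¹ : ℝ) ≤
      (∫ u in Ioc (-1) 0, ‖X u‖ ^ p) ^ (1 / p) +
        t ^ (1 / min p 2) * (∫ u in Ioc 0 t, ‖X u‖ ^ max p 2) ^ (1 / max p 2) := by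
  have hp0 : 0 < p := by linarith
  have hq0 : 0 < max p 2 := lt_max_of_lt_left hp0
  set G : ℝ → ℝ≥0∞ := fun s => ∫⁻ u in Ioc (-1) 0, ‖X (s + u)‖ₑ ^ p
  have hG : Measurable G :=
    ((hX.comp_measurable measurable_add).enorm.pow_const p).lintegral_prod_right'
  have hhist_fin := lintegral_enorm_rpow_ne_top hp0.le hXhist
  have hint_fin := lintegral_enorm_rpow_ne_top hq0.le hXint
  obtain ⟨hint, hle⟩ := integrable_toReal_and_integral_rpow_le (hG.pow_const (2 / p)).aemeasurable
    (by norm_num) (by finiteness) (lintegral_segment_enorm_le hX.aestronglyMeasurable hp)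
  have hsegment : (fun s => (∫ u in Ioc (-1) 0, ‖X (s + u)‖ ^ p) ^ (2 / p)) =
      fun s => (G s ^ (2 / p)).toReal := by
    funext s
    rw [integral_norm_rpow_eq_toReal_lintegral (Y := fun u => X (s + u))
      (hX.comp_measurable (measurable_const_add s)).aestronglyMeasurable hp0.le,
      ENNReal.toReal_rpow]
  refine ⟨hsegment ▸ hint, ?_⟩
  rw [hsegment, integral_norm_rpow_eq_toReal_lintegral hX.aestronglyMeasurable hp0.le,
    integral_norm_rpow_eq_toReal_lintegral hX.aestronglyMeasurable hq0.le]
  convert hle using 1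
  rw [ENNReal.toReal_add (by finiteness) (by finiteness), ENNReal.toReal_mul,
    ← ENNReal.toReal_rpow, ← ENNReal.toReal_rpow, ← ENNReal.toReal_rpow,
    ENNReal.toReal_ofReal ht]

end

/-- **Remark 4.6 (segment norm estimate).** Let `E` be a Banach space, `p ∈ [1,∞)`, `t > 0`,
`f₀ ∈ L^p(−1,0;E)` and let `X : [−1,t] → E` be strongly measurable with `X = f₀` on
`[−1,0)` and `∫_0^t ‖X(u)‖^{p∨2} du < ∞`. Then, with `X_s(u) = X(s+u)`,
`(∫_0^t ‖X_s‖²_{L^p(−1,0;E)} ds)^{1/2}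
  ≤ ‖f₀‖_{L^p(−1,0;E)} + t^{1/(p∧2)} (∫_0^t ‖X(u)‖^{p∨2} du)^{1/(p∨2)}`;
in particular `s ↦ X_s` belongs to `L²(0,t;L^p(−1,0;E))`. -/
theorem segment_norm_estimate
    {E : Type*} [NormedAddCommGroup E]
    (p : ℝ) (hp : 1 ≤ p) (t : ℝ) (ht : 0 < t)
    (f₀ X : ℝ → E)
    (hXmeas : StronglyMeasurable X)
    (hf₀ : ∀ u ∈ Set.Ico (-1:ℝ) 0, X u = f₀ u)
    (hf₀p : IntegrableOn (fun u => ‖f₀ u‖ ^ p) (Set.Ioc (-1:ℝ) 0) volume)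
    (hXint : IntegrableOn (fun u => ‖X u‖ ^ max p 2) (Set.Ioc (0:ℝ) t) volume) :
    IntegrableOn (fun s => (∫ u in Set.Ioc (-1:ℝ) 0, ‖X (s + u)‖ ^ p) ^ (2 / p))
      (Set.Ioc (0:ℝ) t) volume ∧
    (∫ s in Set.Ioc (0:ℝ) t, (∫ u in Set.Ioc (-1:ℝ) 0, ‖X (s + u)‖ ^ p) ^ (2 / p))
        ^ (2⁻¹ : ℝ) ≤
      (∫ u in Set.Ioc (-1:ℝ) 0, ‖f₀ u‖ ^ p) ^ (1 / p)
        + t ^ (1 / min p 2) *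
          (∫ u in Set.Ioc (0:ℝ) t, ‖X u‖ ^ max p 2) ^ (1 / max p 2) := by
  have hXf₀ : (fun u => ‖X u‖ ^ p) =ᵐ[volume.restrict (Ioc (-1) 0)] fun u => ‖f₀ u‖ ^ p := by
    rw [← Measure.restrict_congr_set Ico_ae_eq_Ioc]
    exact ae_restrict_of_forall_mem measurableSet_Ico fun u hu => by simp only [hf₀ u hu]
  rw [← integral_congr_ae hXf₀]
  exact integrableOn_segment_norm_and_le hXmeas hp ht.le (hf₀p.congr_fun_ae hXf₀.symm) hXint

end SDEPaper
end
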